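/- Consider two independent models with success probabilities p₁, p₂ ∈ (0,1) over K ≥ 2 classes, where an incorrect model predicts each of the K-1 wrong classes with probability (1-p_j)/(K-1). Under maximum-likelihood aggregation (which, when the two predictions disagree, follows the model with higher success probability, assuming p₁ ≠ p₂), the correctness probability of the ensemble {l₁, l₂} equals max{p₁, p₂}. -/

import Mathlib

open Finset
open scoped Classical

/-- Probability that a model with success probability `p` predicts class `c`
when the ground truth is `q`: `p` if `c = q`, and `(1-p)/(K-1)` otherwise. -/
noncomputable def wgt (K : ℕ) (q : Fin K) (p : ℝ) (c : Fin K) : ℝ :=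
  if c = q then p else (1 - p) / ((K : ℝ) - 1)

/-- Belief of class `d` under observation `φ` for models with success probabilities `p`. -/
noncomputable def blf {n K : ℕ} (p : Fin n → ℝ) (φ : Fin n → Fin K) (d : Fin K) : ℝ :=
  ∏ i, if φ i = d then p i * ((K : ℝ) - 1) / (1 - p i) else 1

/-- Maximum-likelihood aggregation of observation `φ` yields the ground truth `q`:
`q` is predicted by some model and has strictly maximal belief among predicted classes. -/
def corr {n K : ℕ} (q : Fin K) (p : Fin n → ℝ) (φ : Fin n → Fin K) : Prop :=
  (∃ i, φ i = q) ∧ ∀ d : Fin K, (∃ i, φ i = d) → d ≠ q → blf p φ d < blf p φ q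

/-- Correctness probability of the ensemble of `n` independent models. -/
noncomputable def PA {n : ℕ} (K : ℕ) (q : Fin K) (p : Fin n → ℝ) : ℝ :=
  ∑ φ : Fin n → Fin K, (∏ i, wgt K q (p i) (φ i)) * (if corr q p φ then 1 else 0)

/-! The ensemble is correct exactly when its stronger model is: a disagreement between the
two models is resolved by comparing the likelihood ratios `p (K - 1) / (1 - p)`, which increase
with `p`. Hence the correctness probability is the marginal success probability of the stronger
model, which by independence is `max p₁ p₂`. -/

noncomputable def likelihoodRatio (K : ℕ) (p : ℝ) : ℝ :=
  p * ((K : ℝ) - 1) / (1 - p)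

lemma likelihoodRatio_lt_likelihoodRatio {K : ℕ} (hK : 1 < K) {x y : ℝ} (hxy : x < y)
    (hy : y < 1) : likelihoodRatio K x < likelihoodRatio K y := by
  have hK' : (0 : ℝ) < (K : ℝ) - 1 := by
    have : (1 : ℝ) < K := by exact_mod_cast hK
    linarith
  rw [likelihoodRatio, likelihoodRatio, div_lt_div_iff₀ (by linarith) (by linarith)]
  nlinarith

@[simp]
lemma wgt_self (K : ℕ) (q : Fin K) (p : ℝ) : wgt K q p q = p := if_pos rfl

lemma wgt_of_ne {K : ℕ} {q c : Fin K} (p : ℝ) (hc : c ≠ q) :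
    wgt K q p c = (1 - p) / ((K : ℝ) - 1) := if_neg hc

lemma sum_wgt {K : ℕ} (hK : K ≠ 1) (q : Fin K) (p : ℝ) : ∑ c, wgt K q p c = 1 := by
  have hK' : ((K : ℝ) - 1) ≠ 0 := sub_ne_zero.2 (by exact_mod_cast hK)
  rw [← add_sum_erase _ _ (mem_univ q), wgt_self,
    sum_congr rfl fun c hc => wgt_of_ne p (ne_of_mem_erase hc), sum_const,
    card_erase_of_mem (mem_univ q), card_univ, Fintype.card_fin, nsmul_eq_mul,
    Nat.cast_pred (Fin.pos q)]
  field_simp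
  ring

lemma sum_prod_wgt_mul_ite_eq {n K : ℕ} (hK : K ≠ 1) (q : Fin K) (p : Fin n → ℝ) (j : Fin n) :
    ∑ φ : Fin n → Fin K, (∏ i, wgt K q (p i) (φ i)) * (if φ j = q then 1 else 0) = p j := by
  -- folding the indicator into the `j`-th factor makes the sum over `φ` factorize
  set f : Fin n → Fin K → ℝ := fun i c => if i = j ∧ c ≠ q then 0 else wgt K q (p i) c
  have hf : ∀ φ : Fin n → Fin K,
      (∏ i, wgt K q (p i) (φ i)) * (if φ j = q then 1 else 0) = ∏ i, f i (φ i) := by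
    intro φ
    by_cases hφ : φ j = q
    · rw [if_pos hφ, mul_one]
      refine prod_congr rfl fun i _ => ?_
      by_cases hi : i = j <;> simp [f, hi, hφ]
    · rw [if_neg hφ, mul_zero, eq_comm]
      exact prod_eq_zero (mem_univ j) (if_pos ⟨rfl, hφ⟩)
  rw [sum_congr rfl fun φ _ => hf φ, ← Fintype.prod_sum, Fintype.prod_eq_single j]
  · rw [← add_sum_erase _ _ (mem_univ q), sum_eq_zero fun c hc => if_pos ⟨rfl, ne_of_mem_erase hc⟩]
    simp [f]
  · intro i hi
    simp only [f, hi, false_and, if_false]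
    exact sum_wgt hK q (p i)

lemma blf_of_ne {K : ℕ} (p : Fin 2 → ℝ) (φ : Fin 2 → Fin K) (d : Fin K) {j k : Fin 2}
    (hjk : j ≠ k) :
    blf p φ d = (if φ j = d then likelihoodRatio K (p j) else 1) *
      (if φ k = d then likelihoodRatio K (p k) else 1) := by
  have huniv : (univ : Finset (Fin 2)) = {j, k} := by
    fin_cases j <;> fin_cases k <;> first | exact absurd rfl hjk | decide
  rw [blf, huniv, prod_pair hjk]
  rfl

lemma corr_iff_of_likelihoodRatio_lt {K : ℕ} {q : Fin K} {p : Fin 2 → ℝ} {j k : Fin 2}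
    (hjk : j ≠ k) (h : likelihoodRatio K (p k) < likelihoodRatio K (p j))
    (φ : Fin 2 → Fin K) : corr q p φ ↔ φ j = q := by
  have hmem : ∀ i, i = j ∨ i = k := by
    intro i; fin_cases i <;> fin_cases j <;> fin_cases k <;> simp_all
  constructor
  · rintro ⟨⟨i, hi⟩, hbest⟩
    by_contra hj
    have hk : φ k = q := by rcases hmem i with rfl | rfl <;> simp_all
    have := hbest (φ j) ⟨j, rfl⟩ hj
    rw [blf_of_ne p φ _ hjk, blf_of_ne p φ _ hjk] at this
    simp [hj, hk, Ne.symm hj] at this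
    exact absurd h (not_lt.2 this.le)
  · intro hj
    refine ⟨⟨j, hj⟩, fun d ⟨i, hi⟩ hd => ?_⟩
    have hk : φ k = d := by rcases hmem i with rfl | rfl <;> simp_all
    rw [blf_of_ne p φ _ hjk, blf_of_ne p φ _ hjk]
    simpa [hj, hk, hd, Ne.symm hd] using h

lemma PA_eq_of_corr_iff {n K : ℕ} (hK : K ≠ 1) {q : Fin K} {p : Fin n → ℝ} {j : Fin n}
    (h : ∀ φ, corr q p φ ↔ φ j = q) : PA K q p = p j := by
  simp only [PA, h]
  exact sum_prod_wgt_mul_ite_eq hK q p j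

/-- The correctness probability of a two-model ensemble under maximum-likelihood
aggregation equals `max p₁ p₂`. -/
theorem PA_two_models (K : ℕ) (hK : 2 ≤ K) (q : Fin K) (p₁ p₂ : ℝ)
    (h₁ : p₁ ∈ Set.Ioo (0 : ℝ) 1) (h₂ : p₂ ∈ Set.Ioo (0 : ℝ) 1) (hne : p₁ ≠ p₂) :
    PA K q ![p₁, p₂] = max p₁ p₂ := by
  rcases hne.lt_or_gt with h | h
  · rw [max_eq_right h.le]
    exact PA_eq_of_corr_iff (by omega) <| corr_iff_of_likelihoodRatio_lt (j := 1) (k := 0)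
      (by decide) (likelihoodRatio_lt_likelihoodRatio hK h h₂.2)
  · rw [max_eq_left h.le]
    exact PA_eq_of_corr_iff (by omega) <| corr_iff_of_likelihoodRatio_lt (j := 0) (k := 1)
      (by decide) (likelihoodRatio_lt_likelihoodRatio hK h h₁.2)
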